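/- arXiv:0712.3369 — 4 statements merged into one kernel-verified Lean document; each statement's English description precedes it below -/
import Mathlib

section
/- In the quantum GL(2) algebra at a root of unity q = e^{2πi/N} (N even, N ≥ 6), with relations αβ = q²βα, αγ = γα, γδ = q²δγ, βδ = δβ, γβ = q²βγ, αδ − δα = (q²−1)βγ, the elements α^{N/2}, β^{N/2}, γ^{N/2}, δ^{N/2} are central. -/
section aux
variable {A : Type*} [Ring A] [Algebra ℂ A]

lemma aux_pow_left (t : ℂ) (a b : A) (h : a * b = t • (b * a)) (m : ℕ) :
    a ^ m * b = t ^ m • (b * a ^ m) := by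
  induction m with
  | zero => simp
  | succ n ih =>
    calc a ^ (n+1) * b = a ^ n * (a * b) := by rw [pow_succ, mul_assoc]
      _ = t • (a ^ n * b * a) := by rw [h, mul_smul_comm, mul_assoc]
      _ = t • (t ^ n • (b * a ^ n) * a) := by rw [ih]
      _ = t ^ (n+1) • (b * a ^ (n+1)) := by
          rw [smul_mul_assoc, smul_smul, mul_assoc, ← pow_succ a n]; module

lemma aux_pow_right (t : ℂ) (a b : A) (h : a * b = t • (b * a)) (m : ℕ) :
    a * b ^ m = t ^ m • (b ^ m * a) := by
  induction m with
  | zero => simp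
  | succ n ih =>
    calc a * b ^ (n+1) = (a * b) * b ^ n := by rw [pow_succ', mul_assoc]
      _ = t • (b * (a * b ^ n)) := by rw [h, smul_mul_assoc, mul_assoc]
      _ = t • (b * (t ^ n • (b ^ n * a))) := by rw [ih]
      _ = t ^ (n+1) • (b ^ (n+1) * a) := by
          rw [mul_smul_comm, smul_smul, ← mul_assoc, ← pow_succ' b n]; module

lemma aux_ad (t : ℂ) (α c δ : A)
    (hc : c * δ = t • (δ * c))
    (h6' : α * δ = δ * α + (t - 1) • c) (m : ℕ) :
    α * δ ^ (m + 1) = δ ^ (m + 1) * α + (t ^ (m + 1) - 1) • (δ ^ m * c) := by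
  induction m with
  | zero => simpa using h6'
  | succ n ih =>
    have key : δ ^ n * c * δ = t • (δ ^ (n + 1) * c) := by
      rw [mul_assoc, hc, mul_smul_comm, ← mul_assoc, ← pow_succ]
    calc α * δ ^ (n + 2) = (α * δ ^ (n + 1)) * δ := by rw [pow_succ, mul_assoc]
      _ = δ ^ (n + 1) * (α * δ) + (t ^ (n + 1) - 1) • (δ ^ n * c * δ) := by
          rw [ih, add_mul, smul_mul_assoc, mul_assoc]
      _ = δ ^ (n + 1) * (δ * α) + (t - 1) • (δ ^ (n + 1) * c)
            + (t ^ (n + 1) - 1) • (t • (δ ^ (n + 1) * c)) := by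
          rw [h6', key, mul_add, mul_smul_comm, smul_smul]
      _ = δ ^ (n + 2) * α + (t ^ (n + 2) - 1) • (δ ^ (n + 1) * c) := by
          rw [← mul_assoc, ← pow_succ]; module

lemma aux_da (t : ℂ) (α c δ : A)
    (hc : α * c = t • (c * α))
    (h6' : δ * α = α * δ - (t - 1) • c) (m : ℕ) :
    δ * α ^ (m + 1) = α ^ (m + 1) * δ - (t ^ (m + 1) - 1) • (c * α ^ m) := by
  induction m with
  | zero => simpa using h6'
  | succ n ih =>
    have key : α ^ (n + 1) * c = t ^ (n + 1) • (c * α ^ (n + 1)) :=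
      aux_pow_left t α c hc (n + 1)
    calc δ * α ^ (n + 2) = (δ * α ^ (n + 1)) * α := by rw [pow_succ, mul_assoc]
      _ = α ^ (n + 1) * (δ * α) - (t ^ (n + 1) - 1) • (c * α ^ (n + 1)) := by
          rw [ih, sub_mul, smul_mul_assoc, mul_assoc, mul_assoc c, ← pow_succ]
      _ = α ^ (n + 1) * (α * δ) - (t - 1) • (α ^ (n + 1) * c)
            - (t ^ (n + 1) - 1) • (c * α ^ (n + 1)) := by
          rw [h6', mul_sub, mul_smul_comm]
      _ = α ^ (n + 2) * δ - (t ^ (n + 2) - 1) • (c * α ^ (n + 1)) := by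
          rw [key, ← mul_assoc, ← pow_succ, smul_smul]; module

end aux

/-- In the quantum GL(2) algebra at the root of unity
q = e^{2πi/N} (N even, N ≥ 6), the elements α^{N/2}, β^{N/2}, γ^{N/2},
δ^{N/2} are central, i.e. they commute with each of α, β, γ, δ. -/
theorem stmt_9 (N : ℕ) (hNeven : Even N) (hN : 6 ≤ N)
    (q : ℂ) (hq : q = Complex.exp (2 * Real.pi * Complex.I / N))
    (A : Type*) [Ring A] [Algebra ℂ A] (α β γ δ : A)
    (h1 : α * β = q ^ 2 • (β * α))
    (h2 : α * γ = γ * α)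
    (h3 : γ * δ = q ^ 2 • (δ * γ))
    (h4 : β * δ = δ * β)
    (h5 : γ * β = q ^ 2 • (β * γ))
    (h6 : α * δ - δ * α = (q ^ 2 - 1) • (β * γ)) :
    ∀ x ∈ ({α, β, γ, δ} : Set A), ∀ y ∈ ({α, β, γ, δ} : Set A),
      Commute (x ^ (N / 2)) y := by
  set t : ℂ := q ^ 2 with ht
  set m : ℕ := N / 2 with hm
  have hN0 : (N : ℂ) ≠ 0 := by
    exact_mod_cast Nat.cast_ne_zero.mpr (by omega)
  have hqN : q ^ N = 1 := by
    rw [hq, ← Complex.exp_nat_mul]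
    rw [mul_div_assoc', mul_comm, mul_div_assoc, div_self hN0, mul_one]
    exact Complex.exp_two_pi_mul_I
  have htm : t ^ m = 1 := by
    rw [ht, ← pow_mul]
    have : 2 * m = N := by
      obtain ⟨k, hk⟩ := hNeven
      omega
    rw [this, hqN]
  have hm1 : ∃ n, m = n + 1 := ⟨m - 1, by omega⟩
  -- basic commutes
  have comm_of_left : ∀ a b : A, a * b = t • (b * a) → Commute (a ^ m) b := by
    intro a b h
    have := aux_pow_left t a b h m
    rw [htm, one_smul] at this
    exact this
  have comm_of_right : ∀ a b : A, a * b = t • (b * a) → Commute (b ^ m) a := by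
    intro a b h
    have := aux_pow_right t a b h m
    rw [htm, one_smul] at this
    exact this.symm
  have hbg : (β * γ) * δ = t • (δ * (β * γ)) := by
    rw [mul_assoc, h3, mul_smul_comm, ← mul_assoc, h4, mul_assoc]
  have habg : α * (β * γ) = t • ((β * γ) * α) := by
    rw [← mul_assoc, h1, smul_mul_assoc, mul_assoc, h2, ← mul_assoc]
  have h6' : α * δ = δ * α + (t - 1) • (β * γ) := by
    rw [← h6]; abel
  have h6'' : δ * α = α * δ - (t - 1) • (β * γ) := by
    rw [← h6]; abel
  have cad : Commute (α ^ m) δ := by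
    obtain ⟨n, hn⟩ := hm1
    have := aux_da t α (β * γ) δ habg h6'' n
    rw [← hn, htm, sub_self, zero_smul, sub_zero] at this
    exact this.symm
  have cda : Commute (δ ^ m) α := by
    obtain ⟨n, hn⟩ := hm1
    have := aux_ad t α (β * γ) δ hbg h6' n
    rw [← hn, htm, sub_self, zero_smul, add_zero] at this
    exact this.symm
  have cab : Commute (α ^ m) β := comm_of_left α β h1
  have cba : Commute (β ^ m) α := comm_of_right α β h1
  have cgd : Commute (γ ^ m) δ := comm_of_left γ δ h3
  have cdg : Commute (δ ^ m) γ := comm_of_right γ δ h3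
  have cgb : Commute (γ ^ m) β := comm_of_left γ β h5
  have cbg : Commute (β ^ m) γ := comm_of_right γ β h5
  have cag : Commute (α ^ m) γ := (Commute.pow_left h2 m)
  have cga : Commute (γ ^ m) α := (Commute.pow_left h2.symm m)
  have cbd : Commute (β ^ m) δ := (Commute.pow_left h4 m)
  have cdb : Commute (δ ^ m) β := (Commute.pow_left h4.symm m)
  intro x hx y hy
  simp only [Set.mem_insert_iff, Set.mem_singleton_iff] at hx hy
  rcases hx with rfl | rfl | rfl | rfl <;> rcases hy with rfl | rfl | rfl | rfl <;>
    first
      | exact (Commute.refl _).pow_left m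
      | assumption
end

section
/- In the quantum GL(2) algebra at q = e^{2πi/N} (N even), with det = αδ − γβ, the power det^{N/2} satisfies det^{N/2} = α^{N/2}δ^{N/2} − γ^{N/2}β^{N/2} and is a central element of the algebra. -/
open Polynomial Finset

private lemma qgl2_list_prod_range_eq {M : Type*} [CommMonoid M] (f : ℕ → M) (n : ℕ) :
    ((List.range n).map f).prod = ∏ i ∈ Finset.range n, f i := by
  induction n with
  | zero => simp
  | succ k ih =>
    rw [List.range_succ, Finset.prod_range_succ, List.map_append, List.prod_append, ih,
      List.map_singleton, List.prod_singleton]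

private lemma qgl2_prod_eq (m : ℕ) (hm0 : 0 < m) (ω : ℂ) (hprim : IsPrimitiveRoot ω m)
    {A : Type*} [Ring A] [Algebra ℂ A] (d v : A) (hdv : Commute d v) :
    d ^ m - (-v) ^ m = ((List.range m).map (fun i => d + ω ^ i • v)).prod := by
  have hprimC : IsPrimitiveRoot (C ω : Polynomial ℂ) m :=
    hprim.map_of_injective (C_injective)
  have hpoly : ((X : (Polynomial ℂ)[X]) ^ m - C ((-X) ^ m))
      = ((List.range m).map (fun i => X - C ((C ω) ^ i * (-X)))).prod := by
    rw [qgl2_list_prod_range_eq]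
    exact X_pow_sub_C_eq_prod hprimC hm0 rfl
  have hcomm0 : ∀ a : ℂ, Commute (algebraMap ℂ A a) v := fun a => Algebra.commutes a v
  let f0 : Polynomial ℂ →+* A := eval₂RingHom' (algebraMap ℂ A) v hcomm0
  have hf0X : f0 X = v := eval₂_X _ _
  have hf0C : ∀ a, f0 (C a) = algebraMap ℂ A a := fun a => eval₂_C _ _
  have hcomm1 : ∀ p : Polynomial ℂ, Commute (f0 p) d := by
    intro p
    induction p using Polynomial.induction_on' with
    | add p r hp hr => rw [map_add]; exact hp.add_left hr
    | monomial n a =>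
      rw [← C_mul_X_pow_eq_monomial, map_mul, map_pow, hf0X, hf0C]
      exact Commute.mul_left (Algebra.commutes a d) (hdv.symm.pow_left n)
  let Φ : (Polynomial ℂ)[X] →+* A := eval₂RingHom' f0 d hcomm1
  have hΦ := congrArg Φ hpoly
  have hΦX : Φ X = d := eval₂_X _ _
  have hΦC : ∀ p, Φ (C p) = f0 p := fun p => eval₂_C _ _
  rw [map_sub, map_pow, hΦX, hΦC, map_pow, map_neg, hf0X, map_list_prod,
    List.map_map] at hΦ
  rw [hΦ]
  congr 1
  apply List.map_congr_left
  intro i _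
  show Φ (X - C (C ω ^ i * -X)) = d + ω ^ i • v
  rw [map_sub, hΦX, hΦC, map_mul, map_pow, map_neg, hf0X, hf0C, Algebra.smul_def, map_pow,
    mul_neg, sub_neg_eq_add]

/-- In the quantum GL(2) algebra at q = e^{2πi/N} (N even, N ≥ 6),
with det = αδ − γβ, the power det^{N/2} satisfies
det^{N/2} = α^{N/2}δ^{N/2} − γ^{N/2}β^{N/2} and is central. -/
theorem stmt_10 (N : ℕ) (hNeven : Even N) (hN : 6 ≤ N)
    (q : ℂ) (hq : q = Complex.exp (2 * Real.pi * Complex.I / N))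
    (A : Type*) [Ring A] [Algebra ℂ A] (α β γ δ : A)
    (h1 : α * β = q ^ 2 • (β * α))
    (h2 : α * γ = γ * α)
    (h3 : γ * δ = q ^ 2 • (δ * γ))
    (h4 : β * δ = δ * β)
    (h5 : γ * β = q ^ 2 • (β * γ))
    (h6 : α * δ - δ * α = (q ^ 2 - 1) • (β * γ)) :
    (α * δ - γ * β) ^ (N / 2)
        = α ^ (N / 2) * δ ^ (N / 2) - γ ^ (N / 2) * β ^ (N / 2) ∧
    ∀ x ∈ ({α, β, γ, δ} : Set A), Commute ((α * δ - γ * β) ^ (N / 2)) x := by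
  -- numerics
  have hNmod : N % 2 = 0 := Nat.even_iff.mp hNeven
  obtain ⟨n, hn⟩ : ∃ n, N / 2 = n + 1 := ⟨N / 2 - 1, by omega⟩
  rw [hn]
  set m : ℕ := n + 1 with hmdef
  clear_value m
  have hNm : N = 2 * m := by omega
  have hm0 : 0 < m := by omega
  have hmC : (m : ℂ) ≠ 0 := by exact_mod_cast (by omega : m ≠ 0)
  have hNC2 : (N : ℂ) = 2 * (m : ℂ) := by exact_mod_cast congrArg (Nat.cast (R := ℂ)) hNm
  have hNC : (N : ℂ) ≠ 0 := by
    have : N ≠ 0 := by omega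
    exact_mod_cast this
  have hqN : q ^ N = 1 := by
    rw [hq, ← Complex.exp_nat_mul]
    rw [show (N : ℂ) * (2 * Real.pi * Complex.I / N) = 2 * Real.pi * Complex.I by field_simp]
    exact Complex.exp_two_pi_mul_I
  have hqm : q ^ m = -1 := by
    rw [hq, ← Complex.exp_nat_mul]
    rw [show (m : ℂ) * (2 * Real.pi * Complex.I / N) = Real.pi * Complex.I by
      rw [hNC2]; field_simp]
    exact Complex.exp_pi_mul_I
  set ω : ℂ := q ^ 2 with hω
  have hprim : IsPrimitiveRoot ω m := by
    have h := Complex.isPrimitiveRoot_exp m (by omega)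
    convert h using 1
    rw [hω, hq, ← Complex.exp_nat_mul]
    congr 1
    rw [hNC2]; field_simp; ring
  have hωm : ω ^ m = 1 := by rw [hω, ← pow_mul, ← hNm, hqN]
  have hω0 : ω ≠ 0 := by
    rw [hω, hq]
    exact pow_ne_zero _ (Complex.exp_ne_zero _)
  -- basic derived relations
  have hδα : δ * α = α * δ - (ω - 1) • (β * γ) := by rw [← h6]; abel
  have hbg1 : α * (β * γ) = ω • (β * γ * α) := by
    calc α * (β * γ) = (α * β) * γ := by rw [mul_assoc]
      _ = ω • (β * α) * γ := by rw [h1]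
      _ = ω • (β * (α * γ)) := by rw [smul_mul_assoc, mul_assoc]
      _ = ω • (β * (γ * α)) := by rw [h2]
      _ = ω • (β * γ * α) := by rw [mul_assoc]
  have hbgk : ∀ k, α ^ k * (β * γ) = ω ^ k • (β * γ * α ^ k) := by
    intro k
    induction k with
    | zero => simp
    | succ k ih =>
      calc α ^ (k+1) * (β * γ) = α * (α ^ k * (β * γ)) := by rw [pow_succ', mul_assoc]
        _ = ω ^ k • ((α * (β * γ)) * α ^ k) := by rw [ih, mul_smul_comm, ← mul_assoc]
        _ = ω ^ k • ((ω • (β * γ * α)) * α ^ k) := by rw [hbg1]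
        _ = ω ^ (k+1) • (β * γ * α ^ (k+1)) := by
            rw [smul_mul_assoc, smul_smul, mul_assoc, ← pow_succ', ← pow_succ]
  set v : A := γ * β with hv
  set d : A := α * δ - v with hd
  -- now h5 : v = ω • (β * γ)
  -- commutation of d with the generators
  have hdα : d * α = α * d := by
    have e1 : d * α = α * (α * δ) - (ω * ω) • (β * γ * α) := by
      calc d * α = (α * δ) * α - v * α := by rw [hd, sub_mul]
        _ = α * (δ * α) - ω • (β * γ * α) := by rw [mul_assoc, h5, smul_mul_assoc]
        _ = α * (α * δ - (ω - 1) • (β * γ)) - ω • (β * γ * α) := by rw [hδα]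
        _ = α * (α * δ) - (ω - 1) • (α * (β * γ)) - ω • (β * γ * α) := by
            rw [mul_sub, mul_smul_comm]
        _ = α * (α * δ) - (ω - 1) • (ω • (β * γ * α)) - ω • (β * γ * α) := by rw [hbg1]
        _ = α * (α * δ) - (ω * ω) • (β * γ * α) := by module
    have e2 : α * d = α * (α * δ) - (ω * ω) • (β * γ * α) := by
      calc α * d = α * (α * δ) - α * v := by rw [hd, mul_sub]
        _ = α * (α * δ) - ω • (α * (β * γ)) := by rw [h5, mul_smul_comm]
        _ = α * (α * δ) - ω • (ω • (β * γ * α)) := by rw [hbg1]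
        _ = α * (α * δ) - (ω * ω) • (β * γ * α) := by rw [smul_smul]
    exact e1.trans e2.symm
  have hdδ : d * δ = δ * d := by
    have e1 : d * δ = (α * δ) * δ - (ω * ω) • (δ * (β * γ)) := by
      calc d * δ = (α * δ) * δ - v * δ := by rw [hd, sub_mul]
        _ = (α * δ) * δ - ω • ((β * γ) * δ) := by rw [h5, smul_mul_assoc]
        _ = (α * δ) * δ - ω • (β * (γ * δ)) := by rw [mul_assoc β]
        _ = (α * δ) * δ - ω • (ω • (β * (δ * γ))) := by rw [h3, mul_smul_comm]
        _ = (α * δ) * δ - (ω * ω) • ((β * δ) * γ) := by rw [smul_smul, ← mul_assoc β]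
        _ = (α * δ) * δ - (ω * ω) • (δ * (β * γ)) := by rw [h4, mul_assoc δ]
    have e2 : δ * d = (α * δ) * δ - (ω * ω) • (δ * (β * γ)) := by
      have hbgδ : (β * γ) * δ = ω • (δ * (β * γ)) := by
        calc (β * γ) * δ = β * (γ * δ) := by rw [mul_assoc]
          _ = ω • (β * (δ * γ)) := by rw [h3, mul_smul_comm]
          _ = ω • ((β * δ) * γ) := by rw [mul_assoc]
          _ = ω • (δ * (β * γ)) := by rw [h4, mul_assoc]
      calc δ * d = δ * (α * δ) - δ * v := by rw [hd, mul_sub]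
        _ = (δ * α) * δ - δ * (ω • (β * γ)) := by rw [← mul_assoc, h5]
        _ = (α * δ - (ω - 1) • (β * γ)) * δ - ω • (δ * (β * γ)) := by
            rw [hδα, mul_smul_comm]
        _ = (α * δ) * δ - (ω - 1) • ((β * γ) * δ) - ω • (δ * (β * γ)) := by
            rw [sub_mul, smul_mul_assoc]
        _ = (α * δ) * δ - (ω - 1) • (ω • (δ * (β * γ))) - ω • (δ * (β * γ)) := by rw [hbgδ]
        _ = (α * δ) * δ - (ω * ω) • (δ * (β * γ)) := by module
    exact e1.trans e2.symm
  have hdβ : d * β = ω • (β * d) := by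
    calc d * β = (α * δ) * β - v * β := by rw [hd, sub_mul]
      _ = (α * β) * δ - v * β := by rw [mul_assoc, ← h4, ← mul_assoc]
      _ = ω • (β * (α * δ)) - v * β := by rw [h1, smul_mul_assoc, mul_assoc]
      _ = ω • (β * (α * δ)) - ω • (β * (γ * β)) := by
          rw [h5, smul_mul_assoc, mul_assoc]
      _ = ω • (β * d) := by rw [hd, hv, mul_sub, smul_sub]
  have hγd : γ * d = ω • (d * γ) := by
    calc γ * d = γ * (α * δ) - γ * v := by rw [hd, mul_sub]
      _ = α * (γ * δ) - γ * v := by rw [← mul_assoc, ← h2, mul_assoc]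
      _ = ω • ((α * δ) * γ) - γ * v := by rw [h3, mul_smul_comm, ← mul_assoc]
      _ = ω • ((α * δ) * γ) - ω • ((γ * β) * γ) := by rw [h5, mul_smul_comm, ← mul_assoc]
      _ = ω • (d * γ) := by rw [hd, hv, sub_mul, smul_sub]
  have hcancel : ∀ x y : A, ω • x = ω • y → x = y := by
    intro x y h
    have h' := congrArg (fun z => ω⁻¹ • z) h
    simpa [smul_smul, inv_mul_cancel₀ hω0] using h'
  have hdv : d * v = v * d := by
    apply hcancel
    calc ω • (d * v) = (ω • (d * γ)) * β := by rw [hv, smul_mul_assoc, mul_assoc]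
      _ = (γ * d) * β := by rw [← hγd]
      _ = γ * (ω • (β * d)) := by rw [mul_assoc, ← hdβ]
      _ = ω • (v * d) := by rw [mul_smul_comm, hv, mul_assoc]
  -- the key recursion  α^{k+1} δ^{k+1} = (d + ω^k v) α^k δ^k
  have hL : ∀ k, α * (δ * α ^ k) = α ^ (k+1) * δ - ((ω ^ k - 1) * ω) • (β * γ * α ^ k) := by
    intro k
    induction k with
    | zero => simp
    | succ k ih =>
      calc α * (δ * α ^ (k+1)) = (α * (δ * α ^ k)) * α := by
            rw [pow_succ, ← mul_assoc, ← mul_assoc, mul_assoc α δ]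
        _ = (α ^ (k+1) * δ - ((ω ^ k - 1) * ω) • (β * γ * α ^ k)) * α := by rw [ih]
        _ = α ^ (k+1) * (δ * α) - ((ω ^ k - 1) * ω) • (β * γ * α ^ (k+1)) := by
            rw [sub_mul, smul_mul_assoc, mul_assoc, mul_assoc, ← pow_succ]
        _ = α ^ (k+1) * (α * δ) - (ω - 1) • (α ^ (k+1) * (β * γ))
              - ((ω ^ k - 1) * ω) • (β * γ * α ^ (k+1)) := by
            rw [hδα, mul_sub, mul_smul_comm]
        _ = α ^ (k+1) * (α * δ) - (ω - 1) • (ω ^ (k+1) • (β * γ * α ^ (k+1)))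
              - ((ω ^ k - 1) * ω) • (β * γ * α ^ (k+1)) := by rw [hbgk]
        _ = α ^ (k+1+1) * δ - ((ω ^ (k+1) - 1) * ω) • (β * γ * α ^ (k+1)) := by
            rw [show α ^ (k+1) * (α * δ) = α ^ (k+1+1) * δ by
              rw [← mul_assoc, ← pow_succ]]
            module
  have hXrec : ∀ k, α ^ (k+1) * δ ^ (k+1) = (d + ω ^ k • v) * (α ^ k * δ ^ k) := by
    intro k
    have hu : (α * δ) * (α ^ k * δ ^ k)
        = α ^ (k+1) * δ ^ (k+1) - ((ω ^ k - 1) * ω) • (β * γ * (α ^ k * δ ^ k)) := by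
      calc (α * δ) * (α ^ k * δ ^ k) = (α * (δ * α ^ k)) * δ ^ k := by
            rw [mul_assoc, ← mul_assoc δ, ← mul_assoc]
        _ = (α ^ (k+1) * δ - ((ω ^ k - 1) * ω) • (β * γ * α ^ k)) * δ ^ k := by rw [hL k]
        _ = α ^ (k+1) * δ ^ (k+1) - ((ω ^ k - 1) * ω) • (β * γ * (α ^ k * δ ^ k)) := by
            rw [sub_mul, smul_mul_assoc, mul_assoc (α ^ (k+1)), ← pow_succ',
              mul_assoc (β * γ)]
    have hvX : v * (α ^ k * δ ^ k) = ω • (β * γ * (α ^ k * δ ^ k)) := by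
      rw [h5, smul_mul_assoc]
    refine Eq.symm ?_
    calc (d + ω ^ k • v) * (α ^ k * δ ^ k)
        = (α * δ) * (α ^ k * δ ^ k) - v * (α ^ k * δ ^ k)
            + ω ^ k • (v * (α ^ k * δ ^ k)) := by
          rw [hd, add_mul, sub_mul, smul_mul_assoc]
      _ = α ^ (k+1) * δ ^ (k+1) - ((ω ^ k - 1) * ω) • (β * γ * (α ^ k * δ ^ k))
            - ω • (β * γ * (α ^ k * δ ^ k)) + ω ^ k • (ω • (β * γ * (α ^ k * δ ^ k))) := by
          rw [hu, hvX]
      _ = α ^ (k+1) * δ ^ (k+1) := by module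
  have hcf : ∀ i j : ℕ, Commute (d + ω ^ i • v) (d + ω ^ j • v) := by
    intro i j
    have hc : Commute d v := hdv
    have c1 : Commute d (d + ω ^ j • v) := (Commute.refl d).add_right (hc.smul_right _)
    have c2 : Commute (ω ^ i • v) (d + ω ^ j • v) :=
      ((hc.symm.smul_left _).add_right (((Commute.refl v).smul_left _).smul_right _))
    exact c1.add_left c2
  have hX : ∀ k, α ^ k * δ ^ k
      = ((List.range k).map (fun i => d + ω ^ i • v)).prod := by
    intro k
    induction k with
    | zero => simp
    | succ k ih =>
      rw [List.range_succ, List.map_append, List.prod_append, List.map_singleton,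
        List.prod_singleton, ← ih]
      have hcomm : Commute (d + ω ^ k • v) (α ^ k * δ ^ k) := by
        rw [ih]
        exact Commute.list_prod_right _ _ (by
          intro x hx
          obtain ⟨i, _, rfl⟩ := List.mem_map.mp hx
          exact hcf k i)
      rw [hXrec k, hcomm.eq]
  -- γ^m β^m in terms of v^m
  have hγkβ : ∀ k, γ ^ k * β = ω ^ k • (β * γ ^ k) := by
    intro k
    induction k with
    | zero => simp
    | succ k ih =>
      calc γ ^ (k+1) * β = γ * (γ ^ k * β) := by rw [pow_succ', mul_assoc]
        _ = ω ^ k • ((γ * β) * γ ^ k) := by rw [ih, mul_smul_comm, ← mul_assoc]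
        _ = ω ^ k • ((ω • (β * γ)) * γ ^ k) := by rw [← hv, h5]
        _ = ω ^ (k+1) • (β * γ ^ (k+1)) := by
            rw [smul_mul_assoc, smul_smul, mul_assoc, ← pow_succ', ← pow_succ]
  have hγβk : ∀ k, γ ^ k * β ^ k = (∏ i ∈ range k, ω ^ i) • v ^ k := by
    intro k
    induction k with
    | zero => simp
    | succ k ih =>
      calc γ ^ (k+1) * β ^ (k+1) = γ * ((γ ^ k * β) * β ^ k) := by
            rw [pow_succ' γ, pow_succ' β, mul_assoc, ← mul_assoc (γ ^ k)]
        _ = ω ^ k • (γ * (β * (γ ^ k * β ^ k))) := by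
            rw [hγkβ k, smul_mul_assoc, mul_smul_comm, mul_assoc]
        _ = ω ^ k • (γ * (β * ((∏ i ∈ range k, ω ^ i) • v ^ k))) := by rw [ih]
        _ = (ω ^ k * ∏ i ∈ range k, ω ^ i) • ((γ * β) * v ^ k) := by
            rw [mul_smul_comm, mul_smul_comm, smul_smul, ← mul_assoc]
        _ = (∏ i ∈ range (k+1), ω ^ i) • v ^ (k+1) := by
            rw [prod_range_succ, ← hv, ← pow_succ', mul_comm (ω ^ k)]
  have hprodω : (∏ i ∈ range m, ω ^ i) = (-1 : ℂ) ^ n := by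
    rw [prod_pow_eq_pow_sum, hω, ← pow_mul]
    have hsum : 2 * (∑ i ∈ range m, i) = m * n := by
      have h := Finset.sum_range_id_mul_two m
      have h2 : m - 1 = n := by omega
      rw [h2] at h
      linarith [h]
    rw [hsum, pow_mul, hqm]
  -- main identity
  have hmain : d ^ m = α ^ m * δ ^ m - γ ^ m * β ^ m := by
    have hp := qgl2_prod_eq m hm0 ω hprim d v hdv
    rw [← hX m] at hp
    have hneg : (-v) ^ m = ((-1 : ℂ) ^ m) • v ^ m := by
      have h := smul_pow (-1 : ℂ) v m
      rwa [neg_one_smul] at h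
    have hγβm : γ ^ m * β ^ m = ((-1 : ℂ) ^ n) • v ^ m := by rw [hγβk m, hprodω]
    have hd' : d ^ m = α ^ m * δ ^ m + ((-1 : ℂ) ^ m) • v ^ m := by
      rw [← hneg]
      rw [sub_eq_iff_eq_add] at hp
      exact hp
    rw [hd', hγβm, hmdef]
    module
  refine ⟨hmain, ?_⟩
  -- centrality
  have hdβk : ∀ k, d ^ k * β = ω ^ k • (β * d ^ k) := by
    intro k
    induction k with
    | zero => simp
    | succ k ih =>
      calc d ^ (k+1) * β = d * (d ^ k * β) := by rw [pow_succ', mul_assoc]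
        _ = ω ^ k • ((d * β) * d ^ k) := by rw [ih, mul_smul_comm, ← mul_assoc]
        _ = ω ^ k • ((ω • (β * d)) * d ^ k) := by rw [hdβ]
        _ = ω ^ (k+1) • (β * d ^ (k+1)) := by
            rw [smul_mul_assoc, smul_smul, mul_assoc, ← pow_succ', ← pow_succ]
  have hγdk : ∀ k, γ * d ^ k = ω ^ k • (d ^ k * γ) := by
    intro k
    induction k with
    | zero => simp
    | succ k ih =>
      calc γ * d ^ (k+1) = (γ * d ^ k) * d := by rw [pow_succ, ← mul_assoc]
        _ = ω ^ k • (d ^ k * (γ * d)) := by rw [ih, smul_mul_assoc, mul_assoc]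
        _ = ω ^ k • (d ^ k * (ω • (d * γ))) := by rw [hγd]
        _ = ω ^ (k+1) • (d ^ (k+1) * γ) := by
            rw [mul_smul_comm, smul_smul, ← mul_assoc, ← pow_succ, ← pow_succ]
  intro x hx
  simp only [Set.mem_insert_iff, Set.mem_singleton_iff] at hx
  rcases hx with rfl | rfl | rfl | rfl
  · exact Commute.pow_left hdα m
  · show d ^ m * x = x * d ^ m
    rw [hdβk m, hωm, one_smul]
  · show d ^ m * x = x * d ^ m
    rw [hγdk m, hωm, one_smul]
  · exact Commute.pow_left hdδ m
end

section
/- In the quantum GL(2) algebra at root of unity q = e^{2πi/N} (N even), with Δ defined on generators in the standard matrix fashion, one has Δ(α^{N/2}) = α^{N/2}⊗α^{N/2} + β^{N/2}⊗γ^{N/2}, i.e., the map sending the generating matrix to its entrywise N/2-th powers is comultiplicative. -/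
/-!
With `x = β ⊗ γ` and `y = α ⊗ α` we have `Δ α = x + y`, and the relations `α β = q² β α`,
`α γ = γ α` give `y x = q² x y`. For such `q²`-commuting elements the `q`-binomial theorem
expands `(x + y) ^ m` with Gaussian binomial coefficients `[m, k]_{q²}`. For `m = N / 2` the
number `q²` is a primitive `m`-th root of unity, and the recursion
`[m, k + 1] (q^{2(k+1)} - 1) = [m, k] (q^{2(m-k)} - 1)` makes every `[m, k]` with `0 < k < m`
vanish, leaving `Δ (α ^ m) = x ^ m + y ^ m`.
-/

open scoped TensorProduct
open Finset

/-- The Gaussian binomial coefficient `[n, k]_q`. -/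
def qChoose {R : Type*} [Semiring R] (q : R) : ℕ → ℕ → R
  | 0, 0 => 1
  | 0, _ + 1 => 0
  | _ + 1, 0 => 1
  | n + 1, k + 1 => qChoose q n k + q ^ (k + 1) * qChoose q n (k + 1)

section Semiring

variable {R : Type*} [Semiring R] (q : R)

@[simp]
theorem qChoose_zero_right (n : ℕ) : qChoose q n 0 = 1 := by cases n <;> rfl

theorem qChoose_succ_succ (n k : ℕ) :
    qChoose q (n + 1) (k + 1) = qChoose q n k + q ^ (k + 1) * qChoose q n (k + 1) := rfl

theorem qChoose_eq_zero_of_lt : ∀ {n k : ℕ}, n < k → qChoose q n k = 0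
  | 0, _ + 1, _ => rfl
  | n + 1, k + 1, h => by
    rw [qChoose_succ_succ, qChoose_eq_zero_of_lt (by omega : n < k),
      qChoose_eq_zero_of_lt (by omega : n < k + 1)]
    simp

@[simp]
theorem qChoose_self : ∀ n : ℕ, qChoose q n n = 1
  | 0 => rfl
  | n + 1 => by rw [qChoose_succ_succ, qChoose_self n, qChoose_eq_zero_of_lt q n.lt_succ_self]; simp

end Semiring

section CommRing

variable {R : Type*} [CommRing R] (q : R)

theorem qChoose_succ_right_eq : ∀ n k : ℕ,
    qChoose q n (k + 1) * (q ^ (k + 1) - 1) = qChoose q n k * (q ^ (n - k) - 1)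
  | 0, k => by simp [qChoose_eq_zero_of_lt q k.succ_pos]
  | n + 1, 0 => by
    have ih := qChoose_succ_right_eq n 0
    simp only [qChoose_succ_succ, qChoose_zero_right, Nat.sub_zero] at ih ⊢
    linear_combination q * ih
  | n + 1, k + 1 => by
    have ih₀ := qChoose_succ_right_eq n k
    have ih₁ := qChoose_succ_right_eq n (k + 1)
    rw [qChoose_succ_succ, qChoose_succ_succ, Nat.add_sub_add_right]
    rcases lt_or_ge k n with hkn | hnk
    · obtain ⟨e, rfl⟩ := Nat.exists_eq_add_of_lt hkn
      rw [show k + e + 1 - k = e + 1 by omega] at ih₀ ⊢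
      rw [show k + e + 1 - (k + 1) = e by omega] at ih₁
      linear_combination q ^ (k + 2) * ih₁ + ih₀
    · rw [qChoose_eq_zero_of_lt q (by omega : n < k + 1)] at ih₀ ⊢
      rw [qChoose_eq_zero_of_lt q (by omega : n < k + 1 + 1)]
      linear_combination ih₀

theorem qChoose_eq_zero_of_isPrimitiveRoot [IsDomain R] {m : ℕ} (hq : IsPrimitiveRoot q m) :
    ∀ {k : ℕ}, 0 < k → k < m → qChoose q m k = 0
  | k + 1, _, hk => by
    have h := qChoose_succ_right_eq q m k
    have hfactor : qChoose q m k * (q ^ (m - k) - 1) = 0 := by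
      rcases Nat.eq_zero_or_pos k with rfl | hk0
      · simp [hq.pow_eq_one]
      · rw [qChoose_eq_zero_of_isPrimitiveRoot hq hk0 (by omega), zero_mul]
    rw [hfactor] at h
    exact (mul_eq_zero.mp h).resolve_right
      (sub_ne_zero.mpr (hq.pow_ne_one_of_pos_of_lt k.succ_ne_zero hk))

end CommRing

section QBinomial

variable {R A : Type*} [CommSemiring R] [Semiring A] [Algebra R A] {q : R} {x y : A}

theorem mul_pow_eq_smul_pow_mul (h : y * x = q • (x * y)) (k : ℕ) :
    y * x ^ k = q ^ k • (x ^ k * y) := by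
  induction k with
  | zero => simp
  | succ k ih =>
    rw [pow_succ, ← mul_assoc, ih, smul_mul_assoc, mul_assoc, h, mul_smul_comm, smul_smul,
      ← pow_succ, ← mul_assoc, ← pow_succ]

theorem add_pow_eq_sum_qChoose (h : y * x = q • (x * y)) (n : ℕ) :
    (x + y) ^ n = ∑ p ∈ antidiagonal n, qChoose q n p.1 • (x ^ p.1 * y ^ p.2) := by
  induction n with
  | zero => simp
  | succ n ih =>
    have hshift : ∑ p ∈ antidiagonal n, (q ^ p.1 * qChoose q n p.1) • (x ^ p.1 * y ^ (p.2 + 1))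
        = y ^ (n + 1) + ∑ p ∈ antidiagonal n,
          (q ^ (p.1 + 1) * qChoose q n (p.1 + 1)) • (x ^ (p.1 + 1) * y ^ p.2) := by
      have h₁ := Nat.sum_antidiagonal_succ'
        (f := fun p => (q ^ p.1 * qChoose q n p.1) • (x ^ p.1 * y ^ p.2)) (n := n)
      rw [Nat.sum_antidiagonal_succ, qChoose_eq_zero_of_lt q n.lt_succ_self] at h₁
      simpa using h₁.symm
    rw [pow_succ', ih, mul_sum, Nat.sum_antidiagonal_succ]
    simp only [qChoose_zero_right, pow_zero, one_mul, one_smul, qChoose_succ_succ, add_smul,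
      sum_add_distrib]
    rw [add_left_comm, ← hshift, ← sum_add_distrib]
    refine sum_congr rfl fun p _ => ?_
    rw [add_mul, mul_smul_comm, mul_smul_comm, ← mul_assoc, ← mul_assoc, ← pow_succ',
      mul_pow_eq_smul_pow_mul h, smul_mul_assoc, smul_smul, mul_assoc, ← pow_succ',
      mul_comm (qChoose q n p.1), add_comm]

end QBinomial

theorem add_pow_eq_pow_add_pow_of_isPrimitiveRoot {R A : Type*} [CommRing R] [IsDomain R]
    [Semiring A] [Algebra R A] {q : R} {x y : A} {m : ℕ} (hq : IsPrimitiveRoot q m)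
    (hm : m ≠ 0) (h : y * x = q • (x * y)) : (x + y) ^ m = x ^ m + y ^ m := by
  rw [add_pow_eq_sum_qChoose h m,
    sum_eq_add_of_mem (m, 0) (0, m) (by simp) (by simp) (by simp [hm])]
  · simp
  · rintro ⟨i, j⟩ hij hne
    rw [HasAntidiagonal.mem_antidiagonal] at hij
    rw [qChoose_eq_zero_of_isPrimitiveRoot q hq (by grind) (by grind), zero_smul]

theorem stmt_12_general (N : ℕ) (hNeven : Even N) (hN : 6 ≤ N)
    (q : ℂ) (hq : q = Complex.exp (2 * Real.pi * Complex.I / N))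
    (A : Type*) [Ring A] [Algebra ℂ A] (α β γ : A)
    (h1 : α * β = q ^ 2 • (β * α))
    (h2 : α * γ = γ * α)
    (Δ : A →ₐ[ℂ] A ⊗[ℂ] A)
    (hΔα : Δ α = α ⊗ₜ[ℂ] α + β ⊗ₜ[ℂ] γ) :
    Δ (α ^ (N / 2)) = (α ^ (N / 2)) ⊗ₜ[ℂ] (α ^ (N / 2))
        + (β ^ (N / 2)) ⊗ₜ[ℂ] (γ ^ (N / 2)) := by
  have hprim : IsPrimitiveRoot (q ^ 2) (N / 2) := by
    rw [hq]
    exact (Complex.isPrimitiveRoot_exp N (by omega)).pow_of_dvd two_ne_zero hNeven.two_dvd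
  have hcomm : (α ⊗ₜ[ℂ] α) * (β ⊗ₜ[ℂ] γ) = q ^ 2 • ((β ⊗ₜ[ℂ] γ) * (α ⊗ₜ[ℂ] α)) := by
    rw [Algebra.TensorProduct.tmul_mul_tmul, Algebra.TensorProduct.tmul_mul_tmul, h1, h2,
      TensorProduct.smul_tmul']
  rw [map_pow, hΔα, add_comm, add_pow_eq_pow_add_pow_of_isPrimitiveRoot hprim (by omega) hcomm,
    Algebra.TensorProduct.tmul_pow, Algebra.TensorProduct.tmul_pow, add_comm]

/-- In the quantum GL(2) algebra at the root of unity
q = e^{2πi/N} (N even, N ≥ 6), with the standard comultiplication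
Δ(α) = α⊗α + β⊗γ etc., one has
Δ(α^{N/2}) = α^{N/2}⊗α^{N/2} + β^{N/2}⊗γ^{N/2}. -/
theorem stmt_12 (N : ℕ) (hNeven : Even N) (hN : 6 ≤ N)
    (q : ℂ) (hq : q = Complex.exp (2 * Real.pi * Complex.I / N))
    (A : Type*) [Ring A] [Algebra ℂ A] (α β γ δ : A)
    (h1 : α * β = q ^ 2 • (β * α))
    (h2 : α * γ = γ * α)
    (h3 : γ * δ = q ^ 2 • (δ * γ))
    (h4 : β * δ = δ * β)
    (h5 : γ * β = q ^ 2 • (β * γ))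
    (h6 : α * δ - δ * α = (q ^ 2 - 1) • (β * γ))
    (Δ : A →ₐ[ℂ] A ⊗[ℂ] A)
    (hΔα : Δ α = α ⊗ₜ[ℂ] α + β ⊗ₜ[ℂ] γ)
    (hΔβ : Δ β = α ⊗ₜ[ℂ] β + β ⊗ₜ[ℂ] δ)
    (hΔγ : Δ γ = γ ⊗ₜ[ℂ] α + δ ⊗ₜ[ℂ] γ)
    (hΔδ : Δ δ = γ ⊗ₜ[ℂ] β + δ ⊗ₜ[ℂ] δ) :
    Δ (α ^ (N / 2)) = (α ^ (N / 2)) ⊗ₜ[ℂ] (α ^ (N / 2))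
        + (β ^ (N / 2)) ⊗ₜ[ℂ] (γ ^ (N / 2)) :=
  stmt_12_general N hNeven hN q hq A α β γ h1 h2 Δ hΔα
end

section
/- Let Q be a closed symmetric operator on a Hilbert space H and ρ a selfadjoint unitary (ρ* = ρ, ρ² = I) that anticommutes with Q, i.e., ρ(dom Q) ⊆ dom Q and ρQρ = −Q. Define [Q]_ρ as the restriction of Q* to the domain {x ∈ dom Q* : (ρ − I)x ∈ dom Q}. Then [Q]_ρ is a selfadjoint extension of Q. -/
/-!
Let `ω(x, y) = ⟪Q† x, y⟫ - ⟪x, Q† y⟫` be the boundary form of `Q†` on `dom Q†`. It vanishes as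
soon as one argument lies in `dom Q`, and since `ρ` also anticommutes with `Q†`,
`ω(ρ x, y) = -ω(x, ρ y)`. On `dom [Q]_ρ` the reflection `ρ` moves vectors only by elements of
`dom Q`, so there `ω(x, y) = ω(ρ x, y) = -ω(x, ρ y) = -ω(x, y)`: `[Q]_ρ` is symmetric.
Conversely, if `x ∈ dom [Q]_ρ*` then `u = ρ x - x` satisfies `ω(u, y) = -ω(x, ρ y + y) = 0` for
every `y ∈ dom Q†`, because `ρ y + y` is `ρ`-invariant and hence lies in `dom [Q]_ρ`. Since `Q` is
closed, `Q = Q**`, so `u ∈ dom Q`, i.e. `x ∈ dom [Q]_ρ`.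
-/

open LinearPMap

namespace LinearPMap

variable {𝕜 E F : Type*} [RCLike 𝕜] [NormedAddCommGroup E] [InnerProductSpace 𝕜 E]
  [NormedAddCommGroup F] [InnerProductSpace 𝕜 F]

local notation "⟪" x ", " y "⟫" => inner 𝕜 x y

def boundaryForm (A : E →ₗ.[𝕜] E) (x y : A.domain) : 𝕜 :=
  ⟪A x, (y : E)⟫ - ⟪(x : E), A y⟫

section BoundaryForm

variable {A : E →ₗ.[𝕜] E}

theorem boundaryForm_sub_left (x x' y : A.domain) :
    A.boundaryForm (x - x') y = A.boundaryForm x y - A.boundaryForm x' y := by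
  simp only [boundaryForm, map_sub, Submodule.coe_sub, inner_sub_left]
  ring

theorem boundaryForm_add_right (x y y' : A.domain) :
    A.boundaryForm x (y + y') = A.boundaryForm x y + A.boundaryForm x y' := by
  simp only [boundaryForm, map_add, Submodule.coe_add, inner_add_right]
  ring

theorem boundaryForm_swap (x y : A.domain) :
    A.boundaryForm y x = -starRingEnd 𝕜 (A.boundaryForm x y) := by
  unfold boundaryForm
  rw [_root_.map_sub, inner_conj_symm, inner_conj_symm, neg_sub]

end BoundaryForm

def AnticommutesWith (A : E →ₗ.[𝕜] E) (ρ : E →L[𝕜] E) : Prop :=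
  ∃ hdom : ∀ x ∈ A.domain, ρ x ∈ A.domain,
    ∀ (x : E) (hx : x ∈ A.domain), A ⟨ρ x, hdom x hx⟩ = -ρ (A ⟨x, hx⟩)

variable [CompleteSpace E]

theorem mem_graph_of_inner_adjoint [CompleteSpace F] {T : E →ₗ.[𝕜] F}
    (hT : Dense (T.domain : Set E)) (hclosed : T.IsClosed) {u : E} {w : F}
    (h : ∀ y : T†.domain, ⟪w, (y : F)⟫ = ⟪u, T† y⟫) : (u, w) ∈ T.graph := by
  set G := T.graph.comap (WithLp.linearEquiv 2 𝕜 (E × F) : WithLp 2 (E × F) →ₗ[𝕜] E × F)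
  have hG : _root_.IsClosed (G : Set (WithLp 2 (E × F))) :=
    hclosed.preimage (WithLp.prod_continuous_ofLp 2 E F)
  suffices WithLp.toLp 2 (u, w) ∈ Gᗮᗮ by
    rwa [Submodule.orthogonal_orthogonal_eq_closure, hG.submodule_topologicalClosure_eq] at this
  refine (Submodule.mem_orthogonal' _ _).2 fun v hv => ?_
  have hv' : (v.ofLp.2, -v.ofLp.1) ∈ T†.graph := by
    rw [adjoint_graph_eq_graph_adjoint hT, Submodule.mem_adjoint_iff]
    intro a b hab
    have := hv (WithLp.toLp 2 (a, b)) hab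
    rw [WithLp.prod_inner_apply] at this
    simp only [inner_neg_right, sub_neg_eq_add]
    linear_combination this
  obtain ⟨y, hy, hTy⟩ := (T†.mem_graph_iff).1 hv'
  have key := h y
  rw [hy, hTy, inner_neg_right] at key
  rw [WithLp.prod_inner_apply]
  linear_combination key

theorem adjoint_le_adjoint_of_le {S T : E →ₗ.[𝕜] F} (hS : Dense (S.domain : Set E))
    (h : S ≤ T) : T† ≤ S† :=
  IsFormalAdjoint.le_adjoint hS fun x y => by
    rw [h.2 (y := ⟨x, h.1 x.2⟩) rfl]
    exact (adjoint_isFormalAdjoint (hS.mono h.1)).symm _ y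

variable {T : E →ₗ.[𝕜] E} {ρ : E →L[𝕜] E}

theorem AnticommutesWith.adjoint (hT : Dense (T.domain : Set E)) (hρ : IsSelfAdjoint ρ)
    (h : T.AnticommutesWith ρ) : T†.AnticommutesWith ρ := by
  obtain ⟨hdom, hanti⟩ := h
  have hρ' : ∀ a b : E, ⟪ρ a, b⟫ = ⟪a, ρ b⟫ := hρ.isSymmetric
  have key (x : T†.domain) (v : T.domain) : ⟪-ρ (T† x), v⟫ = ⟪ρ x, T v⟫ := by
    rw [inner_neg_left, hρ', adjoint_isFormalAdjoint hT x ⟨ρ v, hdom v v.2⟩, hanti v v.2,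
      inner_neg_right, neg_neg, hρ']
  exact ⟨fun x hx => mem_adjoint_domain_of_exists _ ⟨_, key ⟨x, hx⟩⟩,
    fun x hx => adjoint_apply_eq hT _ (key ⟨x, hx⟩)⟩

theorem AnticommutesWith.boundaryForm_reflect {A : E →ₗ.[𝕜] E} (hρ : IsSelfAdjoint ρ)
    (h : A.AnticommutesWith ρ) (x y : A.domain) :
    A.boundaryForm ⟨ρ x, h.fst x x.2⟩ y = -A.boundaryForm x ⟨ρ y, h.fst y y.2⟩ := by
  have hρ' : ∀ a b : E, ⟪ρ a, b⟫ = ⟪a, ρ b⟫ := hρ.isSymmetric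
  rw [boundaryForm, boundaryForm, h.snd x x.2, h.snd y y.2, inner_neg_left, inner_neg_right,
    hρ', hρ']
  ring

theorem boundaryForm_adjoint_eq_zero_of_mem (hT : Dense (T.domain : Set E)) (hsymm : T ≤ T†)
    (x y : T†.domain) (hx : (x : E) ∈ T.domain) : T†.boundaryForm x y = 0 := by
  rw [boundaryForm, ← hsymm.2 (x := ⟨x, hx⟩) rfl,
    (adjoint_isFormalAdjoint hT).symm ⟨x, hx⟩ y, sub_self]

theorem boundaryForm_adjoint_left_eq_of_sub_mem (hT : Dense (T.domain : Set E))
    (hsymm : T ≤ T†)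
    {x x' : T†.domain} (h : (x' : E) - x ∈ T.domain) (y : T†.domain) :
    T†.boundaryForm x' y = T†.boundaryForm x y := by
  rw [← sub_eq_zero, ← boundaryForm_sub_left]
  exact boundaryForm_adjoint_eq_zero_of_mem hT hsymm _ y h

theorem boundaryForm_adjoint_right_eq_of_sub_mem (hT : Dense (T.domain : Set E))
    (hsymm : T ≤ T†)
    (x : T†.domain) {y y' : T†.domain} (h : (y' : E) - y ∈ T.domain) :
    T†.boundaryForm x y' = T†.boundaryForm x y := by
  rw [boundaryForm_swap, boundaryForm_adjoint_left_eq_of_sub_mem hT hsymm h, ← boundaryForm_swap]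

variable (T ρ) in
/-- The operator `[T]_ρ`. -/
noncomputable def reflectionExtension : E →ₗ.[𝕜] E :=
  T†.domRestrict (T.domain.comap ((ρ : E →ₗ[𝕜] E) - LinearMap.id))

theorem mem_reflectionExtension_domain {x : E} :
    x ∈ (T.reflectionExtension ρ).domain ↔ x ∈ T†.domain ∧ ρ x - x ∈ T.domain := by
  simp [reflectionExtension, and_comm]

theorem reflectionExtension_apply (x : (T.reflectionExtension ρ).domain) :
    T.reflectionExtension ρ x = T† ⟨x, (mem_reflectionExtension_domain.1 x.2).1⟩ :=
  domRestrict_apply rfl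

theorem reflectionExtension_le_adjoint : T.reflectionExtension ρ ≤ T† :=
  domRestrict_le

theorem le_reflectionExtension (hsymm : T ≤ T†) (hdom : ∀ x ∈ T.domain, ρ x ∈ T.domain) :
    T ≤ T.reflectionExtension ρ :=
  ⟨fun x hx => mem_reflectionExtension_domain.2 ⟨hsymm.1 hx, sub_mem (hdom x hx) hx⟩,
    fun _ y h => (hsymm.2 h).trans (reflectionExtension_apply y).symm⟩

theorem reflectionExtension_isFormalAdjoint (hT : Dense (T.domain : Set E)) (hsymm : T ≤ T†)
    (hρ : IsSelfAdjoint ρ) (h : T.AnticommutesWith ρ) :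
    (T.reflectionExtension ρ).IsFormalAdjoint (T.reflectionExtension ρ) := by
  intro x y
  obtain ⟨hxA, hx⟩ := mem_reflectionExtension_domain.1 x.2
  obtain ⟨hyA, hy⟩ := mem_reflectionExtension_domain.1 y.2
  have hA := h.adjoint hT hρ
  have hω := hA.boundaryForm_reflect hρ ⟨x, hxA⟩ ⟨y, hyA⟩
  rw [boundaryForm_adjoint_left_eq_of_sub_mem (x := ⟨x, hxA⟩) hT hsymm hx,
    boundaryForm_adjoint_right_eq_of_sub_mem (y := ⟨y, hyA⟩) (y' := ⟨ρ y, hA.fst y hyA⟩)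
      hT hsymm _ hy, self_eq_neg] at hω
  rw [reflectionExtension_apply, reflectionExtension_apply]
  exact sub_eq_zero.1 hω

theorem adjoint_reflectionExtension_le (hT : Dense (T.domain : Set E)) (hclosed : T.IsClosed)
    (hsymm : T ≤ T†) (hρ : IsSelfAdjoint ρ) (hρ2 : ρ * ρ = 1) (h : T.AnticommutesWith ρ) :
    (T.reflectionExtension ρ)† ≤ T.reflectionExtension ρ := by
  have hTR := le_reflectionExtension hsymm h.fst (ρ := ρ)
  have hR : Dense ((T.reflectionExtension ρ).domain : Set E) := hT.mono hTR.1
  have hle := adjoint_le_adjoint_of_le hT hTR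
  have hA := h.adjoint hT hρ
  refine ⟨fun x hx => ?_, fun x y hxy => ?_⟩
  · set x' : T†.domain := ⟨x, hle.1 hx⟩
    have hbdry : ∀ z : T†.domain, ρ z - z ∈ T.domain → T†.boundaryForm x' z = 0 := by
      intro z hz
      have := adjoint_isFormalAdjoint hR ⟨x, hx⟩ ⟨z, mem_reflectionExtension_domain.2 ⟨z.2, hz⟩⟩
      rw [hle.2 (y := x') rfl, reflectionExtension_apply] at this
      exact sub_eq_zero.2 this
    set u : T†.domain := ⟨ρ x', hA.fst x' x'.2⟩ - x'
    have hu : ∀ y : T†.domain, T†.boundaryForm u y = 0 := by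
      intro y
      have hfix : ρ (ρ y + y) - (ρ y + y) ∈ T.domain := by
        have hρρ : ρ (ρ y) = y := DFunLike.congr_fun hρ2 (y : E)
        rw [_root_.map_add, hρρ, add_comm, sub_self]
        exact zero_mem _
      rw [boundaryForm_sub_left, hA.boundaryForm_reflect hρ, ← neg_add', ← boundaryForm_add_right,
        hbdry (⟨ρ y, hA.fst y y.2⟩ + y) hfix, neg_zero]
    have hgraph := mem_graph_of_inner_adjoint hT hclosed (u := u) fun y => sub_eq_zero.1 (hu y)
    exact mem_reflectionExtension_domain.2 ⟨x'.2, mem_domain_of_mem_graph hgraph⟩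
  · rw [reflectionExtension_apply]
    exact hle.2 hxy

theorem isSelfAdjoint_reflectionExtension (hT : Dense (T.domain : Set E)) (hclosed : T.IsClosed)
    (hsymm : T ≤ T†) (hρ : IsSelfAdjoint ρ) (hρ2 : ρ * ρ = 1) (h : T.AnticommutesWith ρ) :
    IsSelfAdjoint (T.reflectionExtension ρ) :=
  le_antisymm (adjoint_reflectionExtension_le hT hclosed hsymm hρ hρ2 h)
    ((reflectionExtension_isFormalAdjoint hT hsymm hρ h).le_adjoint
      (hT.mono (le_reflectionExtension hsymm h.fst).1))

end LinearPMap

/-- Let Q be a densely defined closed symmetric operator on a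
complex Hilbert space H and ρ a selfadjoint unitary anticommuting with Q
(ρ preserves dom Q and ρQρ = −Q on dom Q).  Then the restriction [Q]_ρ of the
adjoint Q† to {x ∈ dom Q† : (ρ − 1)x ∈ dom Q} is a selfadjoint extension
of Q. -/
theorem stmt_15 (H : Type*) [NormedAddCommGroup H] [InnerProductSpace ℂ H]
    [CompleteSpace H]
    (Q : H →ₗ.[ℂ] H) (hdense : Dense (Q.domain : Set H))
    (hclosed : IsClosed (Q.graph : Set (H × H)))
    (hsymm : Q ≤ Q.adjoint)
    (ρ : H →L[ℂ] H) (hρ : IsSelfAdjoint ρ) (hρ2 : ρ * ρ = 1)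
    (hρdom : ∀ x ∈ Q.domain, ρ x ∈ Q.domain)
    (hanti : ∀ (x : H) (hx : x ∈ Q.domain),
      Q ⟨ρ x, hρdom x hx⟩ = - ρ (Q ⟨x, hx⟩)) :
    ∃ E : H →ₗ.[ℂ] H,
      (∀ x : H, x ∈ E.domain ↔
        ∃ hx : x ∈ Q.adjoint.domain, ρ x - x ∈ Q.domain) ∧
      (E ≤ Q.adjoint) ∧ (Q ≤ E) ∧ E.adjoint = E :=
  ⟨Q.reflectionExtension ρ, fun _ => mem_reflectionExtension_domain.trans exists_prop.symm,
    reflectionExtension_le_adjoint, le_reflectionExtension hsymm hρdom,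
    isSelfAdjoint_reflectionExtension hdense hclosed hsymm hρ hρ2 ⟨hρdom, hanti⟩⟩
end
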